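/- For every n ≥ 2, X̃_n(2,1) = (1/36)·(n−2)(n−3)(9n²−19n+4)·(n−2)!; as an integer identity, 36·X̃_n(2,1) = (n−2)·(n−3)·(9n²−19n+4)·(n−2)!. -/

import Mathlib

/-!
In the shifted coordinates `X̃_n(h', p) = X_n(n + 1 + h', p)` the recursion reads
`X̃_n(h', p) = (n - h') (X̃_{n-1}(h' - 1, p) + X̃_{n-1}(h', p)) + 2 h' X̃_{n-1}(h', p - 1)`,
so it only lowers `h'` and `p`. Hence `X̃` vanishes for `h' < 0` or `p < 0`, and the values with
`h' ≤ 2`, `p ≤ 1` are computed layer by layer: on each layer the recursion is a first-order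
recurrence in `n` whose inhomogeneous part is already known, solved by an explicit closed form.
-/

/-- Refined counting numbers `Xtab n h p`: `Xtab 1 2 0 = 1`, zero off `(2,0)` at `n = 1`, and
`Xtab n h p = (2n+1-h)·(Xtab (n-1) (h-2) p + Xtab (n-1) (h-1) p) + 2(h-1-n)·Xtab (n-1) (h-1) (p-1)`
for `n ≥ 2`.  `Xtab n h p` counts generalized tree-like tableaux of size `n`, half-perimeter `h`,
with exactly `p` off-diagonal points attached to a diagonal point. -/
def Xtab : ℕ → ℤ → ℤ → ℤ
  | 0, _, _ => 0
  | 1, h, p => if h = 2 ∧ p = 0 then 1 else 0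
  | n + 2, h, p =>
      (2 * ((n : ℤ) + 2) + 1 - h) * (Xtab (n + 1) (h - 2) p + Xtab (n + 1) (h - 1) p)
        + 2 * (h - 1 - ((n : ℤ) + 2)) * Xtab (n + 1) (h - 1) (p - 1)

open Nat

def Xtilde (n : ℕ) (h p : ℤ) : ℤ := Xtab n (n + 1 + h) p

namespace Xtilde

lemma one (h p : ℤ) : Xtilde 1 h p = if h = 0 ∧ p = 0 then 1 else 0 := by
  simp only [Xtilde, Xtab]
  congr 1
  simp only [Nat.cast_one, eq_iff_iff]
  omega

lemma succ_succ (n : ℕ) (h p : ℤ) :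
    Xtilde (n + 2) h p
      = ((n : ℤ) + 2 - h) * (Xtilde (n + 1) (h - 1) p + Xtilde (n + 1) h p)
        + 2 * h * Xtilde (n + 1) h (p - 1) := by
  simp only [Xtilde, Xtab]
  push_cast
  ring_nf

lemma eq_zero_of_neg (n : ℕ) {h p : ℤ} (hhp : h < 0 ∨ p < 0) : Xtilde n h p = 0 := by
  induction n generalizing h p with
  | zero => rfl
  | succ m ih =>
    rcases m with _ | k
    · rw [one, if_neg (by omega)]
    · rw [succ_succ, ih (by omega), ih (by omega), ih (by omega)]
      ring

lemma succ_zero (n : ℕ) (p : ℤ) : Xtilde (n + 1) 0 p = if p = 0 then ((n + 1)! : ℤ) else 0 := by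
  induction n with
  | zero => simp [one]
  | succ k ih =>
    rw [succ_succ, ih, eq_zero_of_neg _ (by omega), factorial_succ (k + 1)]
    split_ifs <;> push_cast <;> ring

lemma two_mul_succ_one_zero (n : ℕ) : 2 * Xtilde (n + 1) 1 0 = n * ((n + 1)! : ℤ) := by
  induction n with
  | zero => simp [one]
  | succ k ih =>
    rw [succ_succ]
    norm_num only [succ_zero, eq_zero_of_neg _ (Or.inr neg_one_lt_zero)]
    push_cast [factorial_succ] at ih ⊢
    linear_combination ((k : ℤ) + 1) * ih

lemma two_mul_succ_one_one (n : ℕ) :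
    2 * Xtilde (n + 1) 1 1 = n * ((n : ℤ) - 1) * (n ! : ℤ) := by
  induction n with
  | zero => simp [one]
  | succ k ih =>
    have h10 := two_mul_succ_one_zero k
    rw [succ_succ]
    norm_num only [succ_zero]
    push_cast [factorial_succ] at h10 ih ⊢
    linear_combination ((k : ℤ) + 1) * ih + 2 * h10

lemma mul_succ_succ_two_zero (n : ℕ) :
    24 * Xtilde (n + 2) 2 0 = n * (3 * (n : ℤ) + 1) * ((n + 2)! : ℤ) := by
  induction n with
  | zero => simp [succ_succ, one]
  | succ k ih =>
    have h10 := two_mul_succ_one_zero (k + 1)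
    rw [succ_succ]
    norm_num only [eq_zero_of_neg _ (Or.inr neg_one_lt_zero)]
    push_cast [factorial_succ] at h10 ih ⊢
    linear_combination ((k : ℤ) + 1) * ih + 12 * ((k : ℤ) + 1) * h10

lemma mul_succ_succ_two_one (n : ℕ) :
    36 * Xtilde (n + 2) 2 1
      = n * ((n : ℤ) - 1) * (9 * (n : ℤ) ^ 2 + 17 * n + 2) * (n ! : ℤ) := by
  induction n with
  | zero => simp [succ_succ, one]
  | succ k ih =>
    have h11 := two_mul_succ_one_one (k + 1)
    have h20 := mul_succ_succ_two_zero k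
    rw [succ_succ]
    norm_num only
    push_cast [factorial_succ] at h11 h20 ih ⊢
    linear_combination ((k : ℤ) + 1) * ih + 18 * ((k : ℤ) + 1) * h11 + 6 * h20

end Xtilde

/-- For every n ≥ 2, 36·X̃_n(2,1) = (n−2)·(n−3)·(9n²−19n+4)·(n−2)!,
where X̃_n(2,1) := X_n(n+3, 1). -/
theorem stmt16 (n : ℕ) (hn : 2 ≤ n) :
    36 * Xtab n ((n : ℤ) + 3) 1
      = ((n : ℤ) - 2) * ((n : ℤ) - 3) * (9 * (n : ℤ) ^ 2 - 19 * (n : ℤ) + 4)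
          * (Nat.factorial (n - 2) : ℤ) := by
  obtain ⟨m, rfl⟩ : ∃ m, n = m + 2 := ⟨n - 2, by omega⟩
  have h := Xtilde.mul_succ_succ_two_one m
  rw [Xtilde, show ((m + 2 : ℕ) : ℤ) + 1 + 2 = (m + 2 : ℕ) + 3 by ring] at h
  rw [h, Nat.add_sub_cancel]
  push_cast
  ring
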